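/- Define p : ℝ × (0,∞) → ℝ by p(x,t) = (2/π) ∫₀^∞ (s/(s²+x²)) · (exp(−s²/(2t))/√(2πt)) ds. Then for every x ≠ 0 and t > 0, p satisfies the non-homogeneous backward heat equation ∂p/∂t = −(1/2) ∂²p/∂x² + 1/(π x² √(2π t)). -/

import Mathlib

open Real MeasureTheory

/-- Density of the process `C(|B(t)|)`: a standard Cauchy process composed with the
absolute value of an independent standard Brownian motion. -/
noncomputable def cauchyBMDensity (x t : ℝ) : ℝ :=
  (2 / π) * ∫ s in Set.Ioi (0 : ℝ),
    (s / (s ^ 2 + x ^ 2)) * (Real.exp (-s ^ 2 / (2 * t)) / Real.sqrt (2 * π * t))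

/-!
Write `p(x, t) = (2/π) ∫₀^∞ f(x, s) g(t, s) ds` with `f(x, s) = s / (s² + x²)`, which is harmonic
in `(x, s)`, and `g` the heat kernel, which solves `∂ₜg = ½ ∂ₛ²g`. Differentiating under the
integral sign,
`∂ₜp + ½ ∂ₓ²p = (1/π) ∫₀^∞ (f ∂ₛ²g - ∂ₛ²f g) ds = (1/π) [f ∂ₛg - ∂ₛf g]₀^∞`,
and since `g` decays at infinity while `f`, `s f` and `∂ₛf` stay bounded, only the boundary term
`∂ₛf(x, 0) g(t, 0) = 1 / (x² √(2πt))` survives.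
-/

open Set Filter Topology

lemma hasDerivAt_mul_deriv_sub_deriv_mul {f f' g g' : ℝ → ℝ} {f'' g'' s : ℝ}
    (hf : HasDerivAt f (f' s) s) (hf' : HasDerivAt f' f'' s) (hg : HasDerivAt g (g' s) s)
    (hg' : HasDerivAt g' g'' s) :
    HasDerivAt (fun u => f u * g' u - f' u * g u) (f s * g'' - f'' * g s) s :=
  ((hf.mul hg').sub (hf'.mul hg)).congr_deriv (by ring)

lemma integrable_quadratic_mul_exp_neg_mul_sq {b : ℝ} (hb : 0 < b) (c d : ℝ) :
    Integrable fun s : ℝ => (c * s ^ 2 + d) * exp (-b * s ^ 2) := by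
  have h2 : Integrable fun s : ℝ => s ^ 2 * exp (-b * s ^ 2) := by
    simpa using integrable_rpow_mul_exp_neg_mul_sq hb (s := 2) (by norm_num)
  refine ((h2.const_mul c).add ((integrable_exp_neg_mul_sq hb).const_mul d)).congr ?_
  exact Eventually.of_forall fun s => by simp only [Pi.add_apply]; ring

lemma hasDerivAt_integral_mul_of_abs_deriv_le {α : Type*} [MeasurableSpace α] {μ : Measure α}
    {F F' : ℝ → α → ℝ} {g : α → ℝ} {U : Set ℝ} {y C : ℝ} (hU : U ∈ 𝓝 y) (hg : Integrable g μ)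
    (hF_meas : ∀ z, AEStronglyMeasurable (F z) μ) (hF'_meas : AEStronglyMeasurable (F' y) μ)
    (hF_int : Integrable (fun a => F y a * g a) μ) (hF'_le : ∀ z ∈ U, ∀ a, |F' z a| ≤ C)
    (hF' : ∀ z ∈ U, ∀ a, HasDerivAt (F · a) (F' z a) z) :
    HasDerivAt (fun z => ∫ a, F z a * g a ∂μ) (∫ a, F' y a * g a ∂μ) y := by
  refine (hasDerivAt_integral_of_dominated_loc_of_deriv_le hU
    (Eventually.of_forall fun z => (hF_meas z).mul hg.aestronglyMeasurable) hF_int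
    (hF'_meas.mul hg.aestronglyMeasurable) ?_ (hg.norm.const_mul C)
    (Eventually.of_forall fun a z hz => (hF' z hz a).mul_const (g a))).2
  refine Eventually.of_forall fun a z hz => ?_
  rw [norm_mul, Real.norm_eq_abs]
  exact mul_le_mul_of_nonneg_right (hF'_le z hz a) (norm_nonneg _)

lemma abs_div_two_lt_abs_mem_nhds {y : ℝ} (hy : y ≠ 0) : {z : ℝ | |y| / 2 < |z|} ∈ 𝓝 y :=
  (isOpen_lt continuous_const continuous_abs).mem_nhds (half_lt_self (abs_pos.2 hy))

noncomputable section

/-- `π` times the density at `x` of the standard Cauchy process at time `s`. -/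
def cauchyKernel (x s : ℝ) : ℝ := s / (s ^ 2 + x ^ 2)

def cauchyKernelDerivX (x s : ℝ) : ℝ := -2 * x * s / (s ^ 2 + x ^ 2) ^ 2

def cauchyKernelDerivXX (x s : ℝ) : ℝ := (6 * x ^ 2 * s - 2 * s ^ 3) / (s ^ 2 + x ^ 2) ^ 3

def cauchyKernelDerivS (x s : ℝ) : ℝ := (x ^ 2 - s ^ 2) / (s ^ 2 + x ^ 2) ^ 2

def heatKernel (t s : ℝ) : ℝ := exp (-s ^ 2 / (2 * t)) / √(2 * π * t)

def heatKernelDerivT (t s : ℝ) : ℝ := (s ^ 2 / (2 * t ^ 2) - 1 / (2 * t)) * heatKernel t s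

end

lemma measurable_cauchyKernel (x : ℝ) : Measurable (cauchyKernel x) := by
  unfold cauchyKernel; fun_prop

lemma measurable_cauchyKernelDerivX (x : ℝ) : Measurable (cauchyKernelDerivX x) := by
  unfold cauchyKernelDerivX; fun_prop

lemma measurable_cauchyKernelDerivXX (x : ℝ) : Measurable (cauchyKernelDerivXX x) := by
  unfold cauchyKernelDerivXX; fun_prop

section Derivatives

variable {x y s t : ℝ}

lemma hasDerivAt_cauchyKernel_x (hy : y ≠ 0) :
    HasDerivAt (fun z => cauchyKernel z s) (cauchyKernelDerivX y s) y := by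
  have hden : HasDerivAt (fun z : ℝ => s ^ 2 + z ^ 2) (2 * y) y := by
    simpa using (hasDerivAt_pow 2 y).const_add (s ^ 2)
  refine ((hasDerivAt_const y s).div hden (by positivity)).congr_deriv ?_
  unfold cauchyKernelDerivX
  field_simp
  ring

lemma hasDerivAt_cauchyKernelDerivX_x (hy : y ≠ 0) :
    HasDerivAt (fun z => cauchyKernelDerivX z s) (cauchyKernelDerivXX y s) y := by
  have hnum : HasDerivAt (fun z : ℝ => -2 * z * s) (-2 * s) y := by
    simpa using ((hasDerivAt_id y).const_mul (-2 : ℝ)).mul_const s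
  have hden := ((hasDerivAt_pow 2 y).const_add (s ^ 2)).fun_pow 2
  refine (hnum.div hden (by positivity)).congr_deriv ?_
  unfold cauchyKernelDerivXX
  field_simp
  ring

lemma hasDerivAt_cauchyKernel_s (hx : x ≠ 0) :
    HasDerivAt (cauchyKernel x) (cauchyKernelDerivS x s) s := by
  have hden : HasDerivAt (fun u : ℝ => u ^ 2 + x ^ 2) (2 * s) s := by
    simpa using (hasDerivAt_pow 2 s).add_const (x ^ 2)
  refine ((hasDerivAt_id' s).div hden (by positivity)).congr_deriv ?_
  unfold cauchyKernelDerivS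
  field_simp
  ring

/-- `(x, s) ↦ s / (s ^ 2 + x ^ 2)` is harmonic. -/
lemma hasDerivAt_cauchyKernelDerivS_s (hx : x ≠ 0) :
    HasDerivAt (cauchyKernelDerivS x) (-cauchyKernelDerivXX x s) s := by
  have hnum : HasDerivAt (fun u : ℝ => x ^ 2 - u ^ 2) (-(2 * s)) s := by
    simpa using (hasDerivAt_pow 2 s).const_sub (x ^ 2)
  have hden := ((hasDerivAt_pow 2 s).add_const (x ^ 2)).fun_pow 2
  refine (hnum.div hden (by positivity)).congr_deriv ?_
  unfold cauchyKernelDerivXX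
  field_simp
  ring

lemma hasDerivAt_heatKernel_s (ht : t ≠ 0) :
    HasDerivAt (heatKernel t) (-s / t * heatKernel t s) s := by
  have hexp : HasDerivAt (fun u : ℝ => -u ^ 2 / (2 * t)) (-s / t) s := by
    refine ((hasDerivAt_pow 2 s).neg.div_const (2 * t)).congr_deriv ?_
    field_simp
    ring
  refine (hexp.exp.div_const _).congr_deriv ?_
  unfold heatKernel
  ring

/-- The heat equation `∂ₜ g = ½ ∂ₛ² g`. -/
lemma hasDerivAt_neg_div_mul_heatKernel (ht : t ≠ 0) :
    HasDerivAt (fun u => -u / t * heatKernel t u) (2 * heatKernelDerivT t s) s := by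
  refine (((hasDerivAt_neg' s).div_const t).mul (hasDerivAt_heatKernel_s ht)).congr_deriv ?_
  unfold heatKernelDerivT
  field_simp
  ring

lemma hasDerivAt_heatKernel_t (ht : 0 < t) :
    HasDerivAt (fun τ => heatKernel τ s) (heatKernelDerivT t s) t := by
  have hexp : HasDerivAt (fun τ : ℝ => -s ^ 2 / (2 * τ)) (s ^ 2 / (2 * t ^ 2)) t := by
    refine ((hasDerivAt_const t (-s ^ 2)).div ((hasDerivAt_id' t).const_mul 2)
      (by positivity)).congr_deriv ?_
    field_simp
    ring
  have hsqrt : HasDerivAt (fun τ : ℝ => √(2 * π * τ)) (π / √(2 * π * t)) t := by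
    refine ((Real.hasDerivAt_sqrt (by positivity)).comp t
      ((hasDerivAt_id' t).const_mul (2 * π))).congr_deriv ?_
    field_simp
  refine (hexp.exp.div hsqrt (by positivity)).congr_deriv ?_
  unfold heatKernelDerivT heatKernel
  field_simp
  rw [Real.sq_sqrt (by positivity)]
  ring

end Derivatives

section Bounds

variable {x z r s : ℝ}

lemma abs_cauchyKernel_le (hx : x ≠ 0) : |cauchyKernel x s| ≤ 1 / (2 * |x|) := by
  have hd : 0 < s ^ 2 + x ^ 2 := by positivity
  rw [cauchyKernel, abs_div, abs_of_pos hd, div_le_div_iff₀ hd (by positivity)]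
  nlinarith [two_mul_le_add_sq |s| |x|, sq_abs s, sq_abs x]

lemma abs_mul_cauchyKernel_le : |s * cauchyKernel x s| ≤ 1 := by
  rw [cauchyKernel, mul_div_assoc', ← sq, abs_div, abs_sq, abs_of_nonneg (by positivity)]
  exact div_le_one_of_le₀ (by nlinarith [sq_nonneg x]) (by positivity)

lemma abs_cauchyKernelDerivS_le (hx : x ≠ 0) : |cauchyKernelDerivS x s| ≤ 1 / x ^ 2 := by
  have hd : 0 < s ^ 2 + x ^ 2 := by positivity
  rw [cauchyKernelDerivS, abs_div, abs_of_pos (pow_pos hd 2), div_le_div_iff₀ (by positivity)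
    (by positivity)]
  have : |x ^ 2 - s ^ 2| ≤ s ^ 2 + x ^ 2 := by
    rw [abs_le]; constructor <;> nlinarith [sq_nonneg s, sq_nonneg x]
  nlinarith [mul_le_mul_of_nonneg_right this (sq_nonneg x), sq_nonneg s]

lemma abs_cauchyKernelDerivX_le (hr : 0 < r) (hz : r ≤ |z|) :
    |cauchyKernelDerivX z s| ≤ 1 / r ^ 2 := by
  have hd : 0 < s ^ 2 + z ^ 2 := by nlinarith [sq_abs z, sq_nonneg s]
  have hr2 : r ^ 2 ≤ s ^ 2 + z ^ 2 := by nlinarith [sq_abs z, sq_nonneg s]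
  rw [cauchyKernelDerivX, abs_div, abs_of_pos (pow_pos hd 2), div_le_div_iff₀ (by positivity)
    (by positivity)]
  have hnum : |-2 * z * s| ≤ s ^ 2 + z ^ 2 := by
    rw [abs_mul, abs_mul, abs_neg, abs_two]
    nlinarith [two_mul_le_add_sq |s| |z|, sq_abs s, sq_abs z]
  nlinarith [mul_le_mul hnum hr2 (by positivity) hd.le]

lemma abs_cauchyKernelDerivXX_le (hr : 0 < r) (hz : r ≤ |z|) :
    |cauchyKernelDerivXX z s| ≤ 3 / r ^ 3 := by
  have hd : 0 < s ^ 2 + z ^ 2 := by nlinarith [sq_abs z, sq_nonneg s]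
  have hr2 : r ^ 2 ≤ s ^ 2 + z ^ 2 := by nlinarith [sq_abs z, sq_nonneg s]
  have hsr : 2 * r * |s| ≤ s ^ 2 + z ^ 2 := by
    nlinarith [two_mul_le_add_sq |s| |z|, sq_abs s, sq_abs z, abs_nonneg s]
  have hnum : |6 * z ^ 2 * s - 2 * s ^ 3| ≤ 6 * |s| * (s ^ 2 + z ^ 2) := by
    rw [show 6 * z ^ 2 * s - 2 * s ^ 3 = 2 * s * (3 * z ^ 2 - s ^ 2) by ring, abs_mul, abs_mul,
      abs_two]
    have : |3 * z ^ 2 - s ^ 2| ≤ 3 * (s ^ 2 + z ^ 2) := by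
      rw [abs_le]; constructor <;> nlinarith [sq_nonneg s, sq_nonneg z]
    nlinarith [abs_nonneg s]
  rw [cauchyKernelDerivXX, abs_div, abs_of_pos (pow_pos hd 3), div_le_div_iff₀ (by positivity)
    (by positivity)]
  calc |6 * z ^ 2 * s - 2 * s ^ 3| * r ^ 3 ≤ 6 * |s| * (s ^ 2 + z ^ 2) * r ^ 3 := by gcongr
    _ = 3 * (2 * r * |s|) * r ^ 2 * (s ^ 2 + z ^ 2) := by ring
    _ ≤ 3 * (s ^ 2 + z ^ 2) * (s ^ 2 + z ^ 2) * (s ^ 2 + z ^ 2) := by gcongr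
    _ = 3 * (s ^ 2 + z ^ 2) ^ 3 := by ring

end Bounds

section HeatKernel

variable {t τ s : ℝ}

lemma heatKernel_nonneg : 0 ≤ heatKernel t s := by
  unfold heatKernel; positivity

lemma heatKernel_eq : heatKernel t = fun s => exp (-(1 / (2 * t)) * s ^ 2) / √(2 * π * t) := by
  ext s; rw [heatKernel]; ring_nf

lemma continuous_heatKernel : Continuous (heatKernel t) := by
  unfold heatKernel; fun_prop

lemma integrable_heatKernel (ht : 0 < t) : Integrable (heatKernel t) := by
  rw [heatKernel_eq]
  exact (integrable_exp_neg_mul_sq (b := 1 / (2 * t))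
    (by positivity)).div_const (√(2 * π * t))

lemma integrable_heatKernelDerivT (ht : 0 < t) : Integrable (heatKernelDerivT t) := by
  refine ((integrable_quadratic_mul_exp_neg_mul_sq (b := 1 / (2 * t)) (by positivity)
    (1 / (2 * t ^ 2)) (-(1 / (2 * t)))).div_const (√(2 * π * t))).congr ?_
  refine Eventually.of_forall fun s => ?_
  rw [heatKernelDerivT, heatKernel_eq]
  ring

lemma tendsto_heatKernel_atTop (ht : 0 < t) : Tendsto (heatKernel t) atTop (𝓝 0) := by
  have h : Tendsto (fun s : ℝ => -(1 / (2 * t)) * s ^ 2) atTop atBot :=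
    (tendsto_pow_atTop two_ne_zero).const_mul_atTop_of_neg (by simp [ht])
  rw [heatKernel_eq, ← zero_div (√(2 * π * t))]
  exact (tendsto_exp_atBot.comp h).div_const _

lemma abs_heatKernelDerivT_le (ht : 0 < t) (hτ : τ ∈ Metric.ball t (t / 2)) :
    |heatKernelDerivT τ s|
      ≤ (2 / t ^ 2 * s ^ 2 + 1 / t) * exp (-(1 / (3 * t)) * s ^ 2) / √(π * t) := by
  rw [Metric.mem_ball, Real.dist_eq, abs_lt] at hτ
  have hτ₀ : 0 < τ := by linarith
  have hkernel : heatKernel τ s ≤ exp (-(1 / (3 * t)) * s ^ 2) / √(π * t) := by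
    rw [heatKernel]
    refine div_le_div₀ (exp_pos _).le (exp_le_exp.mpr ?_) (by positivity)
      (Real.sqrt_le_sqrt (by nlinarith [pi_pos]))
    rw [neg_div, neg_mul, neg_le_neg_iff, div_mul_eq_mul_div, one_mul,
      div_le_div_iff₀ (by positivity) (by positivity)]
    nlinarith [sq_nonneg s]
  have hcoeff : |s ^ 2 / (2 * τ ^ 2) - 1 / (2 * τ)| ≤ 2 / t ^ 2 * s ^ 2 + 1 / t := by
    have h1 : s ^ 2 / (2 * τ ^ 2) ≤ 2 / t ^ 2 * s ^ 2 := by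
      rw [div_mul_eq_mul_div, div_le_div_iff₀ (by positivity) (by positivity)]
      nlinarith [mul_nonneg (sq_nonneg s) (show 0 ≤ 4 * τ ^ 2 - t ^ 2 by nlinarith)]
    have h2 : 1 / (2 * τ) ≤ 1 / t := one_div_le_one_div_of_le ht (by linarith)
    rw [abs_le]
    constructor <;> nlinarith [div_nonneg (sq_nonneg s) (by positivity : (0 : ℝ) ≤ 2 * τ ^ 2),
      (by positivity : (0 : ℝ) < 1 / (2 * τ))]
  rw [heatKernelDerivT, abs_mul, abs_of_nonneg heatKernel_nonneg, mul_div_assoc]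
  exact mul_le_mul hcoeff hkernel heatKernel_nonneg (by positivity)

end HeatKernel

lemma hasDerivAt_setIntegral_mul_heatKernel_t {f : ℝ → ℝ} {S : Set ℝ} {C t : ℝ} (ht : 0 < t)
    (hf : AEStronglyMeasurable f (volume.restrict S)) (hC : ∀ s, |f s| ≤ C) :
    HasDerivAt (fun τ => ∫ s in S, f s * heatKernel τ s)
      (∫ s in S, f s * heatKernelDerivT t s) t := by
  have hC₀ : 0 ≤ C := (abs_nonneg _).trans (hC 0)
  have hbound := ((integrable_quadratic_mul_exp_neg_mul_sq (b := 1 / (3 * t)) (by positivity)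
    (2 / t ^ 2) (1 / t)).div_const (√(π * t))).const_mul C
  refine (hasDerivAt_integral_of_dominated_loc_of_deriv_le
    (F := fun τ s => f s * heatKernel τ s) (F' := fun τ s => f s * heatKernelDerivT τ s)
    (Metric.ball_mem_nhds t (half_pos ht))
    (Eventually.of_forall fun τ => hf.mul continuous_heatKernel.aestronglyMeasurable)
    ((integrable_heatKernel ht).integrableOn.bdd_mul hf (Eventually.of_forall hC))
    (hf.mul (integrable_heatKernelDerivT ht).aestronglyMeasurable.restrict) ?_
    hbound.integrableOn ?_).2
  · refine Eventually.of_forall fun s τ hτ => ?_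
    rw [norm_mul, Real.norm_eq_abs, Real.norm_eq_abs]
    exact mul_le_mul (hC s) (abs_heatKernelDerivT_le ht hτ) (abs_nonneg _) hC₀
  · refine Eventually.of_forall fun s τ hτ => ?_
    have hτ₀ : 0 < τ := by
      rw [Metric.mem_ball, Real.dist_eq, abs_lt] at hτ
      linarith
    exact (hasDerivAt_heatKernel_t hτ₀).const_mul (f s)

lemma integral_cauchyKernel_mul_heatKernelDerivT_add {x t : ℝ} (hx : x ≠ 0) (ht : 0 < t) :
    2 * (∫ s in Ioi 0, cauchyKernel x s * heatKernelDerivT t s)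
      + ∫ s in Ioi 0, cauchyKernelDerivXX x s * heatKernel t s = 1 / (x ^ 2 * √(2 * π * t)) := by
  -- `W = f ∂ₛg - ∂ₛf g`, the boundary term of Green's identity
  set W : ℝ → ℝ := fun u =>
    cauchyKernel x u * (-u / t * heatKernel t u) - cauchyKernelDerivS x u * heatKernel t u
  have hW (s : ℝ) : HasDerivAt W
      (2 * (cauchyKernel x s * heatKernelDerivT t s)
        + cauchyKernelDerivXX x s * heatKernel t s) s :=
    (hasDerivAt_mul_deriv_sub_deriv_mul (hasDerivAt_cauchyKernel_s hx)
      (hasDerivAt_cauchyKernelDerivS_s hx) (hasDerivAt_heatKernel_s ht.ne')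
      (hasDerivAt_neg_div_mul_heatKernel ht.ne')).congr_deriv (by ring)
  have hint₁ : IntegrableOn (fun s => cauchyKernel x s * heatKernelDerivT t s) (Ioi 0) :=
    (integrable_heatKernelDerivT ht).integrableOn.bdd_mul
      (measurable_cauchyKernel x).aestronglyMeasurable
      (Eventually.of_forall fun _ => abs_cauchyKernel_le hx)
  have hint₂ : IntegrableOn (fun s => cauchyKernelDerivXX x s * heatKernel t s) (Ioi 0) :=
    (integrable_heatKernel ht).integrableOn.bdd_mul
      (measurable_cauchyKernelDerivXX x).aestronglyMeasurable
      (Eventually.of_forall fun _ => abs_cauchyKernelDerivXX_le (abs_pos.2 hx) le_rfl)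
  have hW_lim : Tendsto W atTop (𝓝 0) := by
    have hcoeff (u : ℝ) :
        |-(u * cauchyKernel x u) / t - cauchyKernelDerivS x u| ≤ 1 / t + 1 / x ^ 2 :=
      (abs_sub _ _).trans (add_le_add
        (by rw [abs_div, abs_neg, abs_of_pos ht]; gcongr; exact abs_mul_cauchyKernel_le)
        (abs_cauchyKernelDerivS_le hx))
    refine squeeze_zero_norm (fun u => ?_) (by
      simpa only [mul_zero] using (tendsto_heatKernel_atTop ht).const_mul (1 / t + 1 / x ^ 2))
    rw [show W u = (-(u * cauchyKernel x u) / t - cauchyKernelDerivS x u) * heatKernel t u by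
      simp only [W]; ring, norm_mul, Real.norm_eq_abs, Real.norm_eq_abs,
      abs_of_nonneg heatKernel_nonneg]
    exact mul_le_mul_of_nonneg_right (hcoeff u) heatKernel_nonneg
  have hFTC := integral_Ioi_of_hasDerivAt_of_tendsto' (fun s _ => hW s)
    ((hint₁.const_mul 2).add hint₂) hW_lim
  rw [integral_add (hint₁.const_mul 2) hint₂, integral_const_mul] at hFTC
  rw [hFTC]
  simp only [W, cauchyKernel, cauchyKernelDerivS, heatKernel, ne_eq, OfNat.ofNat_ne_zero,
    not_false_eq_true, zero_pow, zero_add, zero_div, neg_zero, exp_zero, zero_mul, mul_zero,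
    sub_zero, zero_sub]
  field_simp

lemma hasDerivAt_cauchyBMDensity_t {x t : ℝ} (hx : x ≠ 0) (ht : 0 < t) :
    HasDerivAt (fun τ => cauchyBMDensity x τ)
      (2 / π * ∫ s in Ioi 0, cauchyKernel x s * heatKernelDerivT t s) t :=
  (hasDerivAt_setIntegral_mul_heatKernel_t ht (measurable_cauchyKernel x).aestronglyMeasurable
    fun _ => abs_cauchyKernel_le hx).const_mul (2 / π)

lemma hasDerivAt_cauchyBMDensity_x {y t : ℝ} (hy : y ≠ 0) (ht : 0 < t) :
    HasDerivAt (fun z => cauchyBMDensity z t)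
      (2 / π * ∫ s in Ioi 0, cauchyKernelDerivX y s * heatKernel t s) y := by
  refine (hasDerivAt_integral_mul_of_abs_deriv_le (abs_div_two_lt_abs_mem_nhds hy)
    (integrable_heatKernel ht).integrableOn
    (fun z => (measurable_cauchyKernel z).aestronglyMeasurable)
    (measurable_cauchyKernelDerivX y).aestronglyMeasurable
    ((integrable_heatKernel ht).integrableOn.bdd_mul
      (measurable_cauchyKernel y).aestronglyMeasurable
      (Eventually.of_forall fun _ => abs_cauchyKernel_le hy))
    (fun _ hz _ => abs_cauchyKernelDerivX_le (half_pos (abs_pos.2 hy)) hz.le)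
    (fun _ hz _ => hasDerivAt_cauchyKernel_x ?_)).const_mul (2 / π)
  exact abs_pos.1 ((half_pos (abs_pos.2 hy)).trans hz)

lemma iteratedDeriv_two_cauchyBMDensity_x {x t : ℝ} (hx : x ≠ 0) (ht : 0 < t) :
    iteratedDeriv 2 (fun y => cauchyBMDensity y t) x
      = 2 / π * ∫ s in Ioi 0, cauchyKernelDerivXX x s * heatKernel t s := by
  have hderiv : deriv (fun y => cauchyBMDensity y t)
      =ᶠ[𝓝 x] fun y => 2 / π * ∫ s in Ioi 0, cauchyKernelDerivX y s * heatKernel t s :=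
    (eventually_ne_nhds hx).mono fun y hy => (hasDerivAt_cauchyBMDensity_x hy ht).deriv
  rw [iteratedDeriv_succ, iteratedDeriv_one, hderiv.deriv_eq]
  refine ((hasDerivAt_integral_mul_of_abs_deriv_le (abs_div_two_lt_abs_mem_nhds hx)
    (integrable_heatKernel ht).integrableOn
    (fun z => (measurable_cauchyKernelDerivX z).aestronglyMeasurable)
    (measurable_cauchyKernelDerivXX x).aestronglyMeasurable
    ((integrable_heatKernel ht).integrableOn.bdd_mul
      (measurable_cauchyKernelDerivX x).aestronglyMeasurable
      (Eventually.of_forall fun _ => abs_cauchyKernelDerivX_le (abs_pos.2 hx) le_rfl))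
    (fun _ hz _ => abs_cauchyKernelDerivXX_le (half_pos (abs_pos.2 hx)) hz.le)
    (fun _ hz _ => hasDerivAt_cauchyKernelDerivX_x ?_)).const_mul (2 / π)).deriv
  exact abs_pos.1 ((half_pos (abs_pos.2 hx)).trans hz)

theorem cauchyBMDensity_backward_heat :
    ∀ x t : ℝ, x ≠ 0 → 0 < t →
      deriv (fun τ => cauchyBMDensity x τ) t
        = -(1 / 2) * iteratedDeriv 2 (fun y => cauchyBMDensity y t) x
          + 1 / (π * x ^ 2 * Real.sqrt (2 * π * t)) := by
  intro x t hx ht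
  rw [(hasDerivAt_cauchyBMDensity_t hx ht).deriv, iteratedDeriv_two_cauchyBMDensity_x hx ht]
  linear_combination (1 / π) * integral_cauchyKernel_mul_heatKernelDerivT_add hx ht
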